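/- arXiv:1905.13182 — 3 statements merged into one kernel-verified Lean document; each statement's English description precedes it below -/
import Mathlib

section
/- Let G be a connected finite graph with n vertices, m edges, and Betti number r = m − n + 1 > 1. Then lim_{t→1} (1−t)^{−r} · Z(G,t)^{−1} = 2^r · χ(G) · κ(G), where χ(G) = 1 − r is the Euler number of G and κ(G) is the number of spanning trees of G. Equivalently, using Bass's formula Z(G,t)^{-1} = (1−t^2)^{m−n} det(I_n − t·A(G) + t^2·Q), one has lim_{t→1} (1−t)^{−r}(1−t^2)^{m−n} det(I_n − t·A(G) + t^2·Q) = 2^r (1−r) κ(G). -/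
open Finset SimpleGraph Filter
open scoped Topology

/-- The complexity `κ(G)`: the number of spanning trees of `G`. -/
noncomputable def numSpanningTrees {V : Type*} (G : SimpleGraph V) : ℕ :=
  Nat.card {T : SimpleGraph V // T ≤ G ∧ T.IsTree}

/-!
Put `P(t) = det (I - tA + t²Q)`. At `t = 1` this matrix is the Laplacian `L`, so `P(1) = 0`,
and as `(1 - t)^{-r} (1 - t²)^{r-1} = (1 + t)^{r-1} / (1 - t)`, the limit is `-2^{r-1} P'(1)`.
By Jacobi's formula, `P'(1)` is the sum over the vertices `i` of `det L` with its `i`-th column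
replaced by the `i`-th column of `-A + 2Q = L + (D - 2I)`, that is, of `(deg i - 2)` times the
principal minor `det L_{ii}`. The matrix-tree theorem gives `det L_{ii} = κ(G)`, whence
`P'(1) = (2m - 2n) κ(G) = 2(r - 1) κ(G)`.

The matrix-tree theorem follows from Cauchy–Binet applied to `L_{ii} = N Nᵀ`, with `N` the
signed incidence matrix without the row of `i`. A maximal minor of `N` is nonzero over a field
exactly when its `n - 1` edges connect the graph, i.e. form a spanning tree; being nonzero
modulo every prime, it is then `±1`.
-/

open Matrix Polynomial

theorem Sym2.mk_out {α : Type*} (e : Sym2 α) : s(e.out.1, e.out.2) = e := Quot.out_eq e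

theorem Sym2.out_fst_ne_out_snd {α : Type*} {e : Sym2 α} (he : ¬ e.IsDiag) :
    e.out.1 ≠ e.out.2 := by
  rwa [← e.mk_out, Sym2.mk_isDiag_iff] at he

theorem Fintype.sum_injective_eq_sum_sum_perm {κ ι M : Type*} [Fintype κ] [DecidableEq κ]
    [Fintype ι] [DecidableEq ι] [AddCommMonoid M] (F : (κ → ι) → M)
    (e : ∀ s : {s : Finset ι // s.card = Fintype.card κ}, κ ≃ s.1) :
    ∑ f : κ → ι with Function.Injective f, F f
      = ∑ s, ∑ σ : Equiv.Perm κ, F (Subtype.val ∘ e s ∘ σ) := by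
  have hrange : ∀ p : {s : Finset ι // s.card = Fintype.card κ} × Equiv.Perm κ,
      Set.range (Subtype.val ∘ e p.1 ∘ p.2) = p.1.1 := fun p => by
    rw [Set.range_comp, Set.range_comp, p.2.range_eq_univ, Set.image_univ,
      (e p.1).range_eq_univ, Set.image_univ, Subtype.range_coe]
  rw [← Fintype.sum_prod_type']
  symm
  refine sum_bij (fun p _ => Subtype.val ∘ e p.1 ∘ p.2) (fun p _ => ?_) (fun p _ q _ h => ?_)
    (fun f hf => ?_) (fun _ _ => rfl)
  · simpa using Subtype.val_injective.comp ((e p.1).injective.comp p.2.injective)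
  · obtain ⟨⟨s, hs⟩, σ⟩ := p
    obtain ⟨⟨t, ht⟩, τ⟩ := q
    obtain rfl : s = t := by
      exact_mod_cast (hrange _).symm.trans ((congrArg Set.range h).trans (hrange _))
    simp only [Prod.mk.injEq, true_and]
    ext j
    exact (e _).injective (Subtype.val_injective (congrFun h j))
  · have hf : Function.Injective f := by simpa using hf
    have hcard : (univ.image f).card = Fintype.card κ := card_image_of_injective _ hf
    let g : κ ≃ univ.image f :=
      Equiv.ofBijective (fun j => ⟨f j, mem_image_of_mem f (mem_univ j)⟩) <| by
        rw [Fintype.bijective_iff_injective_and_card]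
        exact ⟨fun a b h => hf (congrArg Subtype.val h), by rw [Fintype.card_coe, hcard]⟩
    refine ⟨(⟨_, hcard⟩, g.trans (e ⟨_, hcard⟩).symm), mem_univ _, ?_⟩
    ext j
    simp [g]

namespace Matrix

variable {R : Type*} [CommRing R]

section CauchyBinet

variable {κ ι : Type*} [Fintype κ] [DecidableEq κ] [Fintype ι]

theorem det_mul_eq_sum_prod_mul_det_submatrix (B : Matrix κ ι R) (C : Matrix ι κ R) :
    (B * C).det = ∑ f : κ → ι, (∏ j, B j (f j)) * (C.submatrix f id).det := by
  have hrows : (B * C : Matrix κ κ R) = fun j => ∑ l, B j l • C l := by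
    ext j x
    simp [mul_apply]
  change detRowAlternating.toMultilinearMap (B * C) = _
  rw [hrows, MultilinearMap.map_sum]
  refine sum_congr rfl fun f _ => ?_
  rw [MultilinearMap.map_smul_univ, smul_eq_mul]
  rfl

theorem sum_perm_prod_mul_det_submatrix (A C : Matrix κ κ R) :
    ∑ σ : Equiv.Perm κ, (∏ j, A j (σ j)) * (C.submatrix σ id).det = A.det * C.det := by
  rw [← det_transpose A, det_apply', sum_mul]
  refine sum_congr rfl fun σ _ => ?_
  rw [det_permute]
  simp only [transpose_apply]
  ring

/-- Cauchy–Binet, with `e s` an arbitrary enumeration of the subset `s`. -/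
theorem det_mul_eq_sum_det_mul_det [DecidableEq ι] (B : Matrix κ ι R) (C : Matrix ι κ R)
    (e : ∀ s : {s : Finset ι // s.card = Fintype.card κ}, κ ≃ s.1) :
    (B * C).det = ∑ s, (B.submatrix id fun j => (e s j : ι)).det
      * (C.submatrix (fun j => (e s j : ι)) id).det := by
  have hzero : ∀ f : κ → ι, ¬ Function.Injective f →
      (∏ j, B j (f j)) * (C.submatrix f id).det = 0 := fun f hf => by
    obtain ⟨a, b, hab, hne⟩ : ∃ a b, f a = f b ∧ a ≠ b := by
      simpa [Function.Injective] using hf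
    rw [det_zero_of_row_eq hne (by ext; simp [hab]), mul_zero]
  rw [det_mul_eq_sum_prod_mul_det_submatrix, ← sum_filter_of_ne fun f _ h => by
      by_contra hf; exact h (hzero f hf),
    Fintype.sum_injective_eq_sum_sum_perm _ e]
  refine sum_congr rfl fun s _ => ?_
  rw [← sum_perm_prod_mul_det_submatrix]
  rfl

end CauchyBinet

variable {n : Type*} [Fintype n] [DecidableEq n]

theorem det_updateCol_single (A : Matrix n n R) (i : n) :
    (A.updateCol i (Pi.single i 1)).det
      = (A.submatrix (↑) (↑) : Matrix {j // j ≠ i} {j // j ≠ i} R).det := by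
  rw [twoBlockTriangular_det _ (· = i) fun a ha b hb => by
    rw [hb, updateCol_self, Pi.single_eq_of_ne ha]]
  refine (congrArg₂ (· * ·) ?_ ?_).trans (one_mul _)
  · convert det_eq_elem_of_subsingleton
      ((A.updateCol i (Pi.single i 1)).toSquareBlockProp (· = i)) ⟨i, rfl⟩ using 1 <;>
      simp [toSquareBlockProp, toBlock_apply]
  · congr 1
    ext a b
    exact updateCol_ne b.2

theorem det_updateCol_add_single (A : Matrix n n R) (i : n) (c : R) :
    (A.updateCol i ((fun j => A j i) + Pi.single i c)).det
      = A.det + c * (A.submatrix (↑) (↑) : Matrix {j // j ≠ i} {j // j ≠ i} R).det := by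
  have hsingle : Pi.single i c = c • Pi.single i (1 : R) := by
    rw [← Pi.single_smul, smul_eq_mul, mul_one]
  rw [det_updateCol_add, updateCol_eq_self, hsingle, det_updateCol_smul, det_updateCol_single]

theorem det_eq_zero_of_forall_sum_eq_zero [Nonempty n] {A : Matrix n n R}
    (h : ∀ i, ∑ j, A i j = 0) : A.det = 0 := by
  obtain ⟨j⟩ := ‹Nonempty n›
  have := det_updateCol_sum A j 1
  simp only [Pi.one_apply, one_smul, h] at this
  rw [← this]
  exact det_eq_zero_of_column_eq_zero j fun i => by simp

theorem derivative_det (M : Matrix n n R[X]) :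
    derivative M.det = ∑ i, (M.updateCol i fun j => derivative (M j i)).det := by
  simp only [det_apply', map_sum, derivative_intCast_mul, derivative_prod_finset, mul_sum]
  rw [sum_comm]
  refine sum_congr rfl fun i _ => sum_congr rfl fun σ _ => ?_
  rw [← mul_prod_erase univ (fun k => M.updateCol i (fun j => derivative (M j i)) (σ k) k)
    (mem_univ i), updateCol_self, mul_comm (derivative _)]
  congr 2
  exact prod_congr rfl fun k hk => (updateCol_ne (ne_of_mem_erase hk)).symm

theorem eval_derivative_det (M : Matrix n n R[X]) (t : R) :
    (derivative M.det).eval t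
      = ∑ i, ((M.map (eval t)).updateCol i fun j => (derivative (M j i)).eval t).det := by
  simp only [derivative_det, eval_finsetSum, ← coe_evalRingHom, RingHom.map_det,
    RingHom.mapMatrix_apply, map_updateCol]
  rfl

end Matrix

namespace SimpleGraph

section EdgeGraph

variable {V : Type*} (G : SimpleGraph V)

theorem Reachable.eq_of_forall_adj {α : Type*} {f : V → α}
    (hf : ∀ u v, G.Adj u v → f u = f v) {u v : V} (h : G.Reachable u v) : f u = f v := by
  obtain ⟨p⟩ := h
  induction p with
  | nil => rfl
  | cons hadj _ ih => exact (hf _ _ hadj).trans ih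

def edgeGraph (s : Set G.edgeSet) : SimpleGraph V := fromEdgeSet (Subtype.val '' s)

variable {G}

lemma edgeGraph_adj {s : Set G.edgeSet} {u v : V} :
    (G.edgeGraph s).Adj u v ↔ ∃ e ∈ s, (e : Sym2 V) = s(u, v) := by
  simp only [edgeGraph, fromEdgeSet_adj, Set.mem_image, and_iff_left_iff_imp]
  rintro ⟨e, -, he⟩ rfl
  exact G.not_isDiag_of_mem_edgeSet (he ▸ e.2) (Sym2.mk_isDiag_iff.2 rfl)

lemma edgeSet_edgeGraph (s : Set G.edgeSet) : (G.edgeGraph s).edgeSet = Subtype.val '' s := by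
  rw [edgeGraph, edgeSet_fromEdgeSet, sdiff_eq_left, Set.disjoint_left]
  rintro _ ⟨e, -, rfl⟩
  exact G.not_isDiag_of_mem_edgeSet e.2

lemma edgeGraph_le (s : Set G.edgeSet) : G.edgeGraph s ≤ G := by
  intro u v huv
  obtain ⟨e, -, he⟩ := edgeGraph_adj.1 huv
  exact G.mem_edgeSet.1 (he ▸ e.2)

theorem card_preconnected_edgeGraph [Fintype V] [DecidableEq V] (i : V) :
    Nat.card {s : {s : Finset G.edgeSet // s.card = Fintype.card {v // v ≠ i}} //
      (G.edgeGraph s).Preconnected} = numSpanningTrees G := by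
  have hcard : Fintype.card {v // v ≠ i} + 1 = Fintype.card V := by
    rw [Fintype.card_subtype_compl, Fintype.card_subtype_eq]
    have := Fintype.card_pos_iff.2 ⟨i⟩
    omega
  refine Nat.card_congr (Equiv.ofBijective (fun s => ⟨G.edgeGraph s.1.1, edgeGraph_le _, ?_⟩)
    ⟨fun s t hst => ?_, fun T => ?_⟩)
  · rw [isTree_iff_connected_and_card, connected_iff, edgeSet_edgeGraph,
      Nat.card_image_of_injective Subtype.val_injective, Nat.card_coe_set_eq,
      Set.ncard_coe_finset, s.1.2, Nat.card_eq_fintype_card, hcard]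
    exact ⟨⟨s.2, ⟨i⟩⟩, rfl⟩
  · have := congrArg (fun T : {T // T ≤ G ∧ T.IsTree} => T.1.edgeSet) hst
    simp only [edgeSet_edgeGraph] at this
    exact Subtype.ext (Subtype.ext (by exact_mod_cast Subtype.val_injective.image_injective this))
  · classical
    obtain ⟨T, hle, htree⟩ := T
    set s : Finset G.edgeSet := {e | (e : Sym2 V) ∈ T.edgeSet}
    have hsT : G.edgeGraph s = T := by
      refine edgeSet_inj.1 (Set.ext fun e => ?_)
      rw [edgeSet_edgeGraph]
      exact ⟨by rintro ⟨e, he, rfl⟩; simpa [s] using he,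
        fun he => ⟨⟨e, edgeSet_mono hle he⟩, by simpa [s] using he, rfl⟩⟩
    have hs : s.card = Fintype.card {v // v ≠ i} := by
      have := (isTree_iff_connected_and_card.1 htree).2
      rw [← hsT, edgeSet_edgeGraph, Nat.card_image_of_injective Subtype.val_injective,
        Nat.card_coe_set_eq, Set.ncard_coe_finset, Nat.card_eq_fintype_card] at this
      omega
    exact ⟨⟨⟨s, hs⟩, hsT ▸ htree.connected.preconnected⟩, Subtype.ext hsT⟩

end EdgeGraph

section Incidence

variable {V : Type*} [DecidableEq V] (G : SimpleGraph V)

/-- The incidence matrix of `G` with every edge oriented (arbitrarily) from `e.out.1` to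
`e.out.2`. -/
noncomputable def signedIncMatrix (R : Type*) [Ring R] : Matrix V G.edgeSet R :=
  fun v e => (if v = (e : Sym2 V).out.1 then 1 else 0) - (if v = (e : Sym2 V).out.2 then 1 else 0)

variable {G}

lemma signedIncMatrix_mul_apply {R : Type*} [Ring R] (e : G.edgeSet) (u v : V) :
    G.signedIncMatrix R u e * G.signedIncMatrix R v e
      = if u = v then (if u ∈ (e : Sym2 V) then 1 else 0)
        else -(if (e : Sym2 V) = s(u, v) then 1 else 0) := by
  have hne := Sym2.out_fst_ne_out_snd (G.not_isDiag_of_mem_edgeSet e.2)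
  conv_rhs => rw [← Sym2.mk_out (e : Sym2 V)]
  simp only [signedIncMatrix, Sym2.mem_iff, Sym2.eq_iff]
  generalize (e : Sym2 V).out.1 = a, (e : Sym2 V).out.2 = b at *
  split_ifs <;> grind

lemma signedIncMatrix_map {R S : Type*} [Ring R] [Ring S] (f : R →+* S) :
    (G.signedIncMatrix R).map f = G.signedIncMatrix S := by
  ext v e
  simp [signedIncMatrix, apply_ite f]

variable [Fintype V]

theorem signedIncMatrix_mul_transpose (G : SimpleGraph V) [DecidableRel G.Adj]
    (R : Type*) [Ring R] : G.signedIncMatrix R * (G.signedIncMatrix R)ᵀ = G.lapMatrix R := by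
  ext u v
  simp only [mul_apply, transpose_apply, signedIncMatrix_mul_apply]
  rw [sum_set_coe (f := fun e => if u = v then (if u ∈ e then (1 : R) else 0)
    else -(if e = s(u, v) then 1 else 0))]
  by_cases huv : u = v
  · subst huv
    simp only [if_true, sum_boole]
    simp [lapMatrix, degMatrix]
    rw [← card_incidenceFinset_eq_degree, incidenceFinset_eq_filter]
    rfl
  · simp [huv, lapMatrix, degMatrix]

variable {R : Type*} [CommRing R] {i : V}

lemma vecMul_signedIncMatrix (x : V → R) (e : G.edgeSet) :
    (x ᵥ* G.signedIncMatrix R) e = x (e : Sym2 V).out.1 - x (e : Sym2 V).out.2 := by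
  simp [vecMul, dotProduct, signedIncMatrix, mul_sub, sum_sub_distrib]

lemma vecMul_submatrix_signedIncMatrix {y : V → R} (hy : y i = 0)
    (c : {v // v ≠ i} → G.edgeSet) (j : {v // v ≠ i}) :
    ((fun u : {v // v ≠ i} => y u) ᵥ* (G.signedIncMatrix R).submatrix (↑) c) j
      = y (c j : Sym2 V).out.1 - y (c j : Sym2 V).out.2 := by
  rw [← vecMul_signedIncMatrix, vecMul, dotProduct, vecMul, dotProduct,
    Fintype.sum_eq_add_sum_subtype_ne _ i, hy, zero_mul, zero_add]
  rfl

lemma vecMul_submatrix_signedIncMatrix_eq_zero_iff {y : V → R} (hy : y i = 0)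
    {s : Finset G.edgeSet} (e : {v // v ≠ i} ≃ s) :
    (fun u : {v // v ≠ i} => y u) ᵥ*
        (G.signedIncMatrix R).submatrix (↑) (fun j => (e j : G.edgeSet)) = 0
      ↔ ∀ u v, (G.edgeGraph s).Adj u v → y u = y v := by
  simp only [funext_iff, Pi.zero_apply, vecMul_submatrix_signedIncMatrix hy, sub_eq_zero,
    edgeGraph_adj]
  constructor
  · rintro h u v ⟨c, hc, hcuv⟩
    have := h (e.symm ⟨c, hc⟩)
    rw [Equiv.apply_symm_apply] at this
    rw [← Sym2.mk_out (c : Sym2 V)] at hcuv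
    rcases Sym2.eq_iff.1 hcuv with ⟨rfl, rfl⟩ | ⟨rfl, rfl⟩
    · exact this
    · exact this.symm
  · exact fun h j => h _ _ ⟨e j, (e j).2, (Sym2.mk_out _).symm⟩

theorem det_submatrix_signedIncMatrix_ne_zero_iff {A : Type*} [CommRing A] [IsDomain A]
    {s : Finset G.edgeSet} (e : {v // v ≠ i} ≃ s) :
    ((G.signedIncMatrix A).submatrix (↑) (fun j => (e j : G.edgeSet))).det ≠ 0
      ↔ (G.edgeGraph s).Preconnected := by
  classical
  rw [Ne, ← exists_vecMul_eq_zero_iff, not_exists]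
  constructor
  · intro hker
    by_contra hpre
    obtain ⟨w, hw⟩ : ∃ w, ¬ (G.edgeGraph s).Reachable i w := by
      by_contra! h
      exact hpre fun u v => (h u).symm.trans (h v)
    -- the indicator of the component of `w` vanishes at `i` and is constant along edges
    set y : V → A := fun v => if (G.edgeGraph s).Reachable w v then 1 else 0
    have hy : y i = 0 := if_neg fun h => hw h.symm
    refine hker (fun u => y u) ⟨fun h0 => ?_, ?_⟩
    · have := congrFun h0 ⟨w, fun h => hw (h ▸ Reachable.refl _)⟩
      simp [y] at this
    · refine (vecMul_submatrix_signedIncMatrix_eq_zero_iff hy e).2 fun u v huv => ?_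
      have : (G.edgeGraph s).Reachable w u ↔ (G.edgeGraph s).Reachable w v :=
        ⟨fun h => h.trans huv.reachable, fun h => h.trans huv.symm.reachable⟩
      simp only [y, this]
  · rintro hpre x ⟨hx, hxM⟩
    set y : V → A := Function.extend Subtype.val x 0
    have hyx : ∀ u : {v // v ≠ i}, y u = x u := Subtype.val_injective.extend_apply x 0
    have hy : y i = 0 := Function.extend_apply' _ _ _ fun ⟨u, hu⟩ => u.2 hu
    have hconst := (vecMul_submatrix_signedIncMatrix_eq_zero_iff hy e).1 (by simpa only [hyx])
    exact hx (funext fun u => by rw [← hyx, (hpre u i).eq_of_forall_adj _ hconst, hy]; rfl)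

lemma det_submatrix_signedIncMatrix_eq_intCast (c : {v // v ≠ i} → G.edgeSet) :
    ((G.signedIncMatrix R).submatrix (↑) c).det
      = (((G.signedIncMatrix ℤ).submatrix (↑) c).det : R) := by
  rw [← eq_intCast (Int.castRingHom R), RingHom.map_det, RingHom.mapMatrix_apply,
    ← submatrix_map, signedIncMatrix_map]

open Classical in
theorem det_submatrix_signedIncMatrix_mul_self {s : Finset G.edgeSet} (e : {v // v ≠ i} ≃ s) :
    ((G.signedIncMatrix R).submatrix (↑) (fun j => (e j : G.edgeSet))).det
      * ((G.signedIncMatrix R).submatrix (↑) (fun j => (e j : G.edgeSet))).det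
      = if (G.edgeGraph s).Preconnected then 1 else 0 := by
  rw [det_submatrix_signedIncMatrix_eq_intCast]
  set d := ((G.signedIncMatrix ℤ).submatrix (↑) (fun j => (e j : G.edgeSet))).det
  split_ifs with hpre
  · have hd : d.natAbs = 1 := Nat.eq_one_iff_not_exists_prime_dvd.2 fun p hp hdvd => by
      have := Fact.mk hp
      refine (det_submatrix_signedIncMatrix_ne_zero_iff (A := ZMod p) e).2 hpre ?_
      rw [det_submatrix_signedIncMatrix_eq_intCast, ZMod.intCast_zmod_eq_zero_iff_dvd]
      exact Int.natCast_dvd.2 hdvd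
    rw [← Int.cast_mul, ← sq, ← Int.natAbs_sq, hd]
    norm_num
  · have hd : d = 0 := not_not.1 (mt (det_submatrix_signedIncMatrix_ne_zero_iff e).1 hpre)
    rw [hd, Int.cast_zero, zero_mul]

variable (G) [DecidableRel G.Adj] (R)

theorem det_lapMatrix_submatrix_ne (i : V) :
    ((G.lapMatrix R).submatrix ((↑) : {v // v ≠ i} → V) (↑)).det = numSpanningTrees G := by
  classical
  rw [← signedIncMatrix_mul_transpose, submatrix_mul _ _ _ id _ Function.bijective_id,
    det_mul_eq_sum_det_mul_det _ _ fun s => Fintype.equivOfCardEq (by rw [Fintype.card_coe, s.2])]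
  simp only [← transpose_submatrix, det_transpose, submatrix_submatrix, Function.comp_id,
    Function.id_comp]
  rw [sum_congr rfl fun s _ => det_submatrix_signedIncMatrix_mul_self _,
    sum_boole, ← card_preconnected_edgeGraph i, Nat.card_eq_fintype_card]
  simp [Fintype.card_subtype]

theorem det_lapMatrix_eq_zero' [Nonempty V] : (G.lapMatrix R).det = 0 :=
  det_eq_zero_of_forall_sum_eq_zero fun u => by
    simpa [mulVec, dotProduct] using congrFun (G.lapMatrix_mulVec_const_eq_zero (R := R)) u

end Incidence

section Bass

variable {V : Type*} [Fintype V] [DecidableEq V] (G : SimpleGraph V) [DecidableRel G.Adj]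
  (R : Type*) [CommRing R]

noncomputable def bassMatrix : Matrix V V R[X] :=
  1 - (X : R[X]) • G.adjMatrix R[X] + (X ^ 2 : R[X]) • (G.degMatrix R[X] - 1)

lemma bassMatrix_map_eval (t : R) :
    (G.bassMatrix R).map (eval t) = 1 - t • G.adjMatrix R + t ^ 2 • (G.degMatrix R - 1) := by
  ext u v
  by_cases huv : u = v
  · simp [bassMatrix, degMatrix, huv]
  · by_cases hadj : G.Adj u v <;> simp [bassMatrix, degMatrix, huv, hadj]

lemma eval_det_bassMatrix (t : R) :
    (G.bassMatrix R).det.eval t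
      = (1 - t • G.adjMatrix R + t ^ 2 • (G.degMatrix R - 1)).det := by
  rw [← coe_evalRingHom, RingHom.map_det, RingHom.mapMatrix_apply, coe_evalRingHom,
    bassMatrix_map_eval]

lemma bassMatrix_map_eval_one : (G.bassMatrix R).map (eval 1) = G.lapMatrix R := by
  rw [bassMatrix_map_eval, one_smul, one_pow, one_smul, lapMatrix]
  abel

lemma eval_one_derivative_bassMatrix (u v : V) :
    (derivative (G.bassMatrix R u v)).eval 1
      = G.lapMatrix R u v + (Pi.single v ((G.degree v : R) - 2) : V → R) u := by
  by_cases huv : u = v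
  · subst huv
    simp [bassMatrix, lapMatrix, degMatrix]
    ring
  · by_cases hadj : G.Adj u v <;> simp [bassMatrix, lapMatrix, degMatrix, huv, hadj]

theorem eval_one_det_bassMatrix [Nonempty V] : (G.bassMatrix R).det.eval 1 = 0 := by
  rw [← coe_evalRingHom, RingHom.map_det, RingHom.mapMatrix_apply, coe_evalRingHom,
    bassMatrix_map_eval_one, det_lapMatrix_eq_zero']

theorem eval_one_derivative_det_bassMatrix :
    (derivative (G.bassMatrix R).det).eval 1
      = (2 * #G.edgeFinset - 2 * Fintype.card V) * numSpanningTrees G := by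
  have hcol : ∀ i, (fun j => (derivative (G.bassMatrix R j i)).eval 1)
      = (fun j => G.lapMatrix R j i) + Pi.single i ((G.degree i : R) - 2) :=
    fun i => funext fun j => eval_one_derivative_bassMatrix G R j i
  have hdeg : ∑ v, (G.degree v : R) = 2 * #G.edgeFinset := by
    rw [← Nat.cast_sum, G.sum_degrees_eq_twice_card_edges]
    push_cast
    rfl
  simp only [eval_derivative_det, bassMatrix_map_eval_one, hcol, det_updateCol_add_single,
    det_lapMatrix_submatrix_ne]
  have hL : ∑ _ : V, (G.lapMatrix R).det = 0 :=
    sum_eq_zero fun i _ => have : Nonempty V := ⟨i⟩; det_lapMatrix_eq_zero' G R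
  rw [sum_add_distrib, hL, zero_add, ← sum_mul, sum_sub_distrib, hdeg, sum_const, card_univ,
    nsmul_eq_mul]
  ring

end Bass

end SimpleGraph

theorem Polynomial.tendsto_one_sub_zpow_mul_eval {𝕜 : Type*} [NontriviallyNormedField 𝕜]
    (P : 𝕜[X]) (hP : P.eval 1 = 0) (k : ℕ) :
    Tendsto (fun t : 𝕜 => (1 - t) ^ (-((k + 1 : ℕ) : ℤ)) * (1 - t ^ 2) ^ k * P.eval t)
      (𝓝[≠] 1) (𝓝 (-2 ^ k * (derivative P).eval 1)) := by
  have hslope := hasDerivAt_iff_tendsto_slope.1 (P.hasDerivAt 1)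
  have hpow : Tendsto (fun t : 𝕜 => -(1 + t) ^ k) (𝓝[≠] 1) (𝓝 (-2 ^ k)) := by
    have : Continuous (fun t : 𝕜 => -(1 + t) ^ k) := by fun_prop
    simpa [one_add_one_eq_two] using (this.tendsto 1).mono_left nhdsWithin_le_nhds
  refine (hpow.mul hslope).congr' (eventually_nhdsWithin_of_forall fun t (ht : t ≠ 1) => ?_)
  have h1t : 1 - t ≠ 0 := sub_ne_zero.2 (Ne.symm ht)
  have ht1 : t - 1 ≠ 0 := sub_ne_zero.2 ht
  simp only [slope_def_field, hP]
  rw [_root_.zpow_neg, zpow_natCast, show 1 - t ^ 2 = (1 - t) * (1 + t) by ring, mul_pow]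
  field_simp
  ring

theorem stmt1_general {n : ℕ} (G : SimpleGraph (Fin n)) [DecidableRel G.Adj]
    (m r : ℕ) (hm : G.edgeFinset.card = m)
    (hr : m + 1 = n + r) (hr1 : 1 < r) :
    Filter.Tendsto (fun t : ℂ =>
        (1 - t) ^ (-(r : ℤ)) * (1 - t ^ 2) ^ (m - n) *
          Matrix.det ((1 : Matrix (Fin n) (Fin n) ℂ) - t • G.adjMatrix ℂ
            + t ^ 2 • (Matrix.diagonal (fun i => (G.degree i : ℂ)) - 1)))
      (𝓝[≠] 1)
      (𝓝 ((2 : ℂ) ^ r * (1 - (r : ℂ)) * (numSpanningTrees G : ℂ))) := by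
  obtain ⟨k, rfl⟩ : ∃ k, r = k + 1 := ⟨r - 1, by omega⟩
  obtain rfl : m = n + k := by omega
  have hn : n ≠ 0 := by
    rintro rfl
    have := G.card_edgeFinset_le_card_choose_two
    rw [Fintype.card_fin, Nat.choose_zero_succ] at this
    omega
  have : Nonempty (Fin n) := ⟨⟨0, Nat.pos_of_ne_zero hn⟩⟩
  have hlim :=
    (G.bassMatrix ℂ).det.tendsto_one_sub_zpow_mul_eval (G.eval_one_det_bassMatrix ℂ) k
  rw [eval_one_derivative_det_bassMatrix, hm, Fintype.card_fin] at hlim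
  simp only [eval_det_bassMatrix, degMatrix] at hlim
  rw [Nat.add_sub_cancel_left]
  convert hlim using 2
  push_cast
  ring

theorem stmt1 {n : ℕ} (G : SimpleGraph (Fin n)) [DecidableRel G.Adj]
    (hG : G.Connected) (m r : ℕ) (hm : G.edgeFinset.card = m)
    (hr : m + 1 = n + r) (hr1 : 1 < r) :
    Filter.Tendsto (fun t : ℂ =>
        (1 - t) ^ (-(r : ℤ)) * (1 - t ^ 2) ^ (m - n) *
          Matrix.det ((1 : Matrix (Fin n) (Fin n) ℂ) - t • G.adjMatrix ℂ
            + t ^ 2 • (Matrix.diagonal (fun i => (G.degree i : ℂ)) - 1)))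
      (𝓝[≠] 1)
      (𝓝 ((2 : ℂ) ^ r * (1 - (r : ℂ)) * (numSpanningTrees G : ℂ))) :=
  stmt1_general G m r hm hr hr1
end

section
/- Let G be a connected finite graph with n vertices and m edges, and W = W(G) a weighted matrix of G. Then the reciprocal of the second weighted Bartholdi zeta function of G satisfies ζ_1(G,w,u,t)^{-1} = det(I_{2m} − t(B_w − (1−u)J_0)) = (1 − (1−u)^2 t^2)^{m−n} · det(I_n − t·W + (1−u)t^2(D_w − (1−u)I_n)). -/
open Finset SimpleGraph

/-- The weighted arc (dart) matrix `B_w`: its `(e,f)` entry is `w(f)` when the terminus of `e`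
is the origin of `f`, and `0` otherwise. -/
noncomputable def dartWeightMatrix {V : Type*} [DecidableEq V] (G : SimpleGraph V)
    (W : Matrix V V ℂ) : Matrix G.Dart G.Dart ℂ :=
  fun d e => if d.snd = e.fst then W e.fst e.snd else 0

/-- The matrix `J₀`: its `(e,f)` entry is `1` when `f = e⁻¹`, and `0` otherwise. -/
noncomputable def dartFlipMatrix {V : Type*} [DecidableEq V] (G : SimpleGraph V) :
    Matrix G.Dart G.Dart ℂ :=
  fun d e => if e = d.symm then 1 else 0

/-!
Let `S` be the `V × D(G)` matrix with `S v e = [t(e) = v]` and `L` the one with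
`L v e = [o(e) = v] w(e)`. Then `B_w = Sᵀ L`, `L Sᵀ = W` and `L J₀ Sᵀ = D_w`.
Put `a = (1 - u) t` and `c = 1 - a²`. Since `J₀² = 1`,
`(I - t (B_w - (1 - u) J₀)) (I - a J₀) = c I - t Sᵀ L (I - a J₀)`,
and `det (I - a J₀) = c ^ m`, because `J₀` becomes a block swap once the darts are split
by orientation. The scaled Weinstein–Aronszajn identity
`c ^ n det (c I - X Y) = c ^ 2m det (c I - Y X)` moves the determinant to the vertices,
where `L (I - a J₀) Sᵀ = W - a D_w`. This proves the formula multiplied by `c ^ m`;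
that factor cancels unless `c = 0 < m`, and then both sides vanish.
-/

open Matrix

namespace Matrix

variable {m n R : Type*} [Fintype m] [Fintype n] [DecidableEq m] [DecidableEq n] [CommRing R]

theorem pow_card_mul_det_scalar_sub_mul_comm (A : Matrix m n R) (B : Matrix n m R) (c : R) :
    c ^ Fintype.card n * det (scalar m c - A * B) =
      c ^ Fintype.card m * det (scalar n c - B * A) := by
  simpa [eval_charpoly] using congrArg (Polynomial.eval c) (charpoly_mul_comm' A B)

end Matrix

namespace SimpleGraph

theorem sum_darts_eq_sum_sum {V M : Type*} [Fintype V] [AddCommMonoid M] (G : SimpleGraph V)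
    [DecidableRel G.Adj] (f : V → V → M) (hf : ∀ u v, ¬ G.Adj u v → f u v = 0) :
    ∑ d : G.Dart, f d.fst d.snd = ∑ u, ∑ v, f u v := by
  have hdarts : (univ : Finset G.Dart).map ⟨Dart.toProd, Dart.toProd_injective⟩ =
      univ.filter (fun p : V × V => G.Adj p.1 p.2) := by
    ext p
    simpa using ⟨fun ⟨d, hd⟩ => hd ▸ d.adj, fun h => ⟨⟨p, h⟩, rfl⟩⟩
  calc ∑ d : G.Dart, f d.fst d.snd = ∑ p : V × V with G.Adj p.1 p.2, f p.1 p.2 := by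
        rw [← hdarts, sum_map]; rfl
    _ = ∑ u, ∑ v, f u v := by
        rw [sum_filter_of_ne fun p _ => not_imp_comm.1 (hf p.1 p.2), Fintype.sum_prod_type']

section Orientation

variable {V : Type*} [LinearOrder V] (G : SimpleGraph V)

abbrev PosDart := {d : G.Dart // d.fst < d.snd}

def posDartSumEquiv : G.PosDart ⊕ G.PosDart ≃ G.Dart :=
  (Equiv.sumCongr (Equiv.refl _)
    (Equiv.subtypeEquiv (Dart.symm_involutive.toPerm _) fun d =>
      ⟨fun h => h.not_gt, fun h => lt_of_le_of_ne (not_lt.1 h) d.fst_ne_snd⟩)).trans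
    (Equiv.sumCompl _)

@[simp]
theorem posDartSumEquiv_inl (p : G.PosDart) : G.posDartSumEquiv (.inl p) = p := rfl

@[simp]
theorem posDartSumEquiv_inr (p : G.PosDart) : G.posDartSumEquiv (.inr p) = p.1.symm := rfl

variable {G}

theorem PosDart.ne_symm (p q : G.PosDart) : p.1 ≠ q.1.symm := fun h =>
  lt_asymm q.2 (by simpa [h] using p.2)

theorem submatrix_dartFlipMatrix_posDartSumEquiv :
    (dartFlipMatrix G).submatrix G.posDartSumEquiv G.posDartSumEquiv = fromBlocks 0 1 1 0 := by
  ext (p | p) (q | q) <;>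
    simp [dartFlipMatrix, one_apply, PosDart.ne_symm, (PosDart.ne_symm _ _).symm, Subtype.ext_iff,
      Dart.symm_involutive.injective.eq_iff, eq_comm]

variable [Fintype V] [DecidableRel G.Adj]

theorem card_posDart : Fintype.card G.PosDart = #G.edgeFinset := by
  have h := Fintype.card_congr G.posDartSumEquiv
  rw [Fintype.card_sum, dart_card_eq_twice_card_edges] at h
  omega

end Orientation

section Incidence

variable {V : Type*} [DecidableEq V] (G : SimpleGraph V)

def dartTerminalIncidence : Matrix V G.Dart ℂ := of fun v d => if d.snd = v then 1 else 0

def dartOriginIncidence (W : Matrix V V ℂ) : Matrix V G.Dart ℂ :=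
  of fun v d => if d.fst = v then W d.fst d.snd else 0

variable {G} {W : Matrix V V ℂ} [Fintype V]

theorem transpose_dartTerminalIncidence_mul_dartOriginIncidence :
    (dartTerminalIncidence G)ᵀ * dartOriginIncidence G W = dartWeightMatrix G W := by
  ext d e
  simp [dartTerminalIncidence, dartOriginIncidence, dartWeightMatrix, mul_apply, eq_comm]

variable [DecidableRel G.Adj]

theorem mul_dartFlipMatrix_apply {ι : Type*} (M : Matrix ι G.Dart ℂ) (i : ι) (d : G.Dart) :
    (M * dartFlipMatrix G) i d = M i d.symm := by
  rw [mul_apply, Fintype.sum_eq_single d.symm fun e he => ?_]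
  · simp [dartFlipMatrix]
  · have hde : d ≠ e.symm := by rintro rfl; simp at he
    simp [dartFlipMatrix, hde]

theorem dartFlipMatrix_mul_self : dartFlipMatrix G * dartFlipMatrix G = 1 := by
  ext d e
  simp [mul_dartFlipMatrix_apply, dartFlipMatrix, one_apply,
    Dart.symm_involutive.injective.eq_iff, eq_comm]

theorem dartOriginIncidence_mul_transpose_dartTerminalIncidence
    (hW : ∀ i j, ¬ G.Adj i j → W i j = 0) :
    dartOriginIncidence G W * (dartTerminalIncidence G)ᵀ = W := by
  ext i j
  simp only [dartTerminalIncidence, dartOriginIncidence, mul_apply, transpose_apply, of_apply]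
  rw [sum_darts_eq_sum_sum G (fun u v => (if u = i then W u v else 0) * if v = j then 1 else 0)
    fun u v h => by simp [hW u v h]]
  simp

theorem dartOriginIncidence_mul_dartFlipMatrix_mul_transpose_dartTerminalIncidence
    (hW : ∀ i j, ¬ G.Adj i j → W i j = 0) :
    dartOriginIncidence G W * dartFlipMatrix G * (dartTerminalIncidence G)ᵀ =
      diagonal fun i => ∑ j, W i j := by
  ext i j
  rw [mul_apply]
  simp only [mul_dartFlipMatrix_apply, dartOriginIncidence, dartTerminalIncidence,
    transpose_apply, of_apply, Dart.symm_toProd, Prod.fst_swap, Prod.snd_swap]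
  rw [sum_darts_eq_sum_sum G (fun u v => (if v = i then W v u else 0) * if v = j then 1 else 0)
    fun u v h => by simp [hW v u (fun h' => h h'.symm)]]
  rw [Finset.sum_comm]
  obtain rfl | hij := eq_or_ne i j
  · simp
  · simp [hij, hij.symm]

end Incidence

section Determinant

variable {V : Type*} [Fintype V] [LinearOrder V] {G : SimpleGraph V} [DecidableRel G.Adj]

theorem det_one_add_smul_dartFlipMatrix (a : ℂ) :
    det (1 + a • dartFlipMatrix G) = (1 - a ^ 2) ^ #G.edgeFinset := by
  have hblocks : (1 + a • dartFlipMatrix G).submatrix G.posDartSumEquiv G.posDartSumEquiv =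
      fromBlocks 1 (a • 1) (a • 1) 1 := by
    change (1 : Matrix G.Dart G.Dart ℂ).submatrix _ _ + a • (dartFlipMatrix G).submatrix _ _ = _
    rw [submatrix_one_equiv, submatrix_dartFlipMatrix_posDartSumEquiv, ← fromBlocks_one,
      fromBlocks_smul, fromBlocks_add]
    simp
  have hschur : (1 : Matrix G.PosDart G.PosDart ℂ) - a • 1 * a • 1 = (1 - a ^ 2) • 1 := by
    rw [smul_mul_smul_comm, one_mul, sub_smul, one_smul, sq]
  rw [← det_submatrix_equiv_self G.posDartSumEquiv, hblocks, det_fromBlocks_one₂₂, hschur,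
    det_smul, det_one, mul_one, card_posDart]

variable {W : Matrix V V ℂ}

theorem det_one_sub_smul_mul_pow_card_edgeFinset (u t : ℂ) :
    det (1 - t • (dartWeightMatrix G W - (1 - u) • dartFlipMatrix G)) *
        (1 - (1 - u) ^ 2 * t ^ 2) ^ #G.edgeFinset =
      det (scalar G.Dart (1 - (1 - u) ^ 2 * t ^ 2) - (t • (dartTerminalIncidence G)ᵀ) *
        (dartOriginIncidence G W * (1 - (t * (1 - u)) • dartFlipMatrix G))) := by
  have hflip : det (1 - (t * (1 - u)) • dartFlipMatrix G) =
      (1 - (1 - u) ^ 2 * t ^ 2) ^ #G.edgeFinset := by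
    rw [sub_eq_add_neg, ← neg_smul, det_one_add_smul_dartFlipMatrix]; ring
  rw [← hflip, ← det_mul, ← transpose_dartTerminalIncidence_mul_dartOriginIncidence]
  congr 1
  simp only [Matrix.sub_mul, Matrix.mul_sub, Matrix.smul_mul, Matrix.mul_smul, Matrix.one_mul,
    Matrix.mul_one, Matrix.mul_assoc, dartFlipMatrix_mul_self, smul_smul, scalar_apply]
  rw [← smul_one_eq_diagonal]
  module

theorem dartOriginIncidence_mul_one_sub_smul_dartFlipMatrix_mul
    (hW : ∀ i j, ¬ G.Adj i j → W i j = 0) (a t : ℂ) :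
    dartOriginIncidence G W * (1 - a • dartFlipMatrix G) * (t • (dartTerminalIncidence G)ᵀ) =
      t • (W - a • diagonal fun i => ∑ j, W i j) := by
  simp only [Matrix.mul_sub, Matrix.sub_mul, Matrix.mul_one, Matrix.mul_smul, Matrix.smul_mul,
    dartOriginIncidence_mul_transpose_dartTerminalIncidence hW,
    dartOriginIncidence_mul_dartFlipMatrix_mul_transpose_dartTerminalIncidence hW]

theorem pow_mul_det_one_sub_smul_mul_pow_card (hW : ∀ i j, ¬ G.Adj i j → W i j = 0)
    (u t : ℂ) :
    (1 - (1 - u) ^ 2 * t ^ 2) ^ #G.edgeFinset *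
        (det (1 - t • (dartWeightMatrix G W - (1 - u) • dartFlipMatrix G)) *
          (1 - (1 - u) ^ 2 * t ^ 2) ^ Fintype.card V) =
      (1 - (1 - u) ^ 2 * t ^ 2) ^ #G.edgeFinset *
        ((1 - (1 - u) ^ 2 * t ^ 2) ^ #G.edgeFinset *
          det (1 - t • W +
            ((1 - u) * t ^ 2) • (diagonal (fun i => ∑ j, W i j) - (1 - u) • 1))) := by
  set c := 1 - (1 - u) ^ 2 * t ^ 2 with hc
  calc
    _ = c ^ Fintype.card V *
          (det (1 - t • (dartWeightMatrix G W - (1 - u) • dartFlipMatrix G)) *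
            c ^ #G.edgeFinset) := by
      ring
    _ = c ^ Fintype.card G.Dart * det (scalar V c - dartOriginIncidence G W *
          (1 - (t * (1 - u)) • dartFlipMatrix G) * (t • (dartTerminalIncidence G)ᵀ)) := by
      rw [det_one_sub_smul_mul_pow_card_edgeFinset, pow_card_mul_det_scalar_sub_mul_comm]
    _ = _ := by
      rw [dartOriginIncidence_mul_one_sub_smul_dartFlipMatrix_mul hW,
        dart_card_eq_twice_card_edges, two_mul, pow_add, mul_assoc, scalar_apply,
        ← smul_one_eq_diagonal, hc]
      congr 3
      module

end Determinant

end SimpleGraph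

theorem stmt10_general {n : ℕ} (G : SimpleGraph (Fin n)) [DecidableRel G.Adj]
    (m : ℕ) (hm : G.edgeFinset.card = m)
    (W : Matrix (Fin n) (Fin n) ℂ)
    (hW0 : ∀ i j, ¬ G.Adj i j → W i j = 0) :
    ∀ u t : ℂ,
      Matrix.det ((1 : Matrix G.Dart G.Dart ℂ)
          - t • (dartWeightMatrix G W - (1 - u) • dartFlipMatrix G))
        * (1 - (1 - u) ^ 2 * t ^ 2) ^ n
      = (1 - (1 - u) ^ 2 * t ^ 2) ^ m *
        Matrix.det ((1 : Matrix (Fin n) (Fin n) ℂ) - t • W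
          + ((1 - u) * t ^ 2) • (Matrix.diagonal (fun i => ∑ j, W i j) - (1 - u) • 1)) := by
  intro u t
  subst hm
  by_cases hc : (1 - (1 - u) ^ 2 * t ^ 2) ^ #G.edgeFinset = 0
  · obtain ⟨hc0, hE⟩ := pow_eq_zero_iff'.1 hc
    have hn : n ≠ 0 := by
      rintro rfl
      exact hE (card_eq_zero.2 (eq_empty_of_isEmpty _))
    rw [hc, zero_mul, hc0, zero_pow hn, mul_zero]
  · simpa using mul_left_cancel₀ hc (pow_mul_det_one_sub_smul_mul_pow_card hW0 u t)

/-- Mizuno–Sato. -/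
theorem stmt10 {n : ℕ} (G : SimpleGraph (Fin n)) [DecidableRel G.Adj]
    (hG : G.Connected) (m : ℕ) (hm : G.edgeFinset.card = m)
    (W : Matrix (Fin n) (Fin n) ℂ)
    (hW0 : ∀ i j, ¬ G.Adj i j → W i j = 0) :
    ∀ u t : ℂ,
      Matrix.det ((1 : Matrix G.Dart G.Dart ℂ)
          - t • (dartWeightMatrix G W - (1 - u) • dartFlipMatrix G))
        * (1 - (1 - u) ^ 2 * t ^ 2) ^ n
      = (1 - (1 - u) ^ 2 * t ^ 2) ^ m *
        Matrix.det ((1 : Matrix (Fin n) (Fin n) ℂ) - t • W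
          + ((1 - u) * t ^ 2) • (Matrix.diagonal (fun i => ∑ j, W i j) - (1 - u) • 1)) :=
  stmt10_general G m hm W hW0
end

section
/- Let G be a connected finite graph with n vertices, Γ a finite group, α: D(G) → Γ an ordinary voltage assignment, and W(G) a symmetric weighted matrix of G. Let ρ_1 = 1, ρ_2, ..., ρ_k be a complete set of inequivalent irreducible (complex) representations of Γ with degrees f_i (f_1 = 1). Then f_{w̃}(G^α, u, t) = f_w(G, u, t) · ∏_{i=2}^{k} det( I_{n f_i} − t Σ_{g ∈ Γ} ρ_i(g) ⊗ W_g + (1−u) t^2 · I_{f_i} ⊗ (D_w − (1−u)I_n) )^{f_i}. -/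
/-!
Reindexed by `Γ × V`, the covering matrix is `I - t ∑_g R(g) ⊗ W_g + c (I ⊗ D')`, where `R` is
the right regular representation of `Γ` by permutation matrices, `c = (1 - u) t²` and
`D' = D_w - (1 - u) I`. The Fourier matrix `P (g, (i, a, b)) = ρ_i(g)_{ab}` has the left inverse
`(f_i / |Γ|) ρ_i(g⁻¹)_{ba}` by the Schur orthogonality relations, and it is square because
`∑ f_i² = |Γ|`. Conjugation by `P` turns `R(g)` into the block diagonal matrix
`⊕_i I_{f_i} ⊗ ρ_i(g)`, so the determinant splits into the factors
`det (I - t ∑_g ρ_i(g) ⊗ W_g + c (I ⊗ D'))^{f_i}`; the trivial representation gives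
`f_w(G, u, t)`.
-/

open Finset SimpleGraph Matrix
open scoped Kronecker

/-- The derived graph (`Γ`-covering) `G^α` of an ordinary voltage assignment `α`. -/
def derivedGraph {V : Type*} {Γ : Type*} [Group Γ] (G : SimpleGraph V) (α : V → V → Γ)
    (hα : ∀ u v, G.Adj u v → α v u = (α u v)⁻¹) : SimpleGraph (V × Γ) where
  Adj x y := G.Adj x.1 y.1 ∧ y.2 = x.2 * α x.1 y.1
  symm := by
    constructor
    rintro ⟨u, g⟩ ⟨v, h⟩ ⟨hadj, he⟩
    dsimp only at *
    refine ⟨hadj.symm, ?_⟩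
    rw [he, hα u v hadj]
    group
  loopless := by
    constructor
    rintro ⟨u, g⟩ ⟨h, _⟩
    exact G.loopless.irrefl u h

/-- The weight on the covering derived from a weight `W` on the base graph. -/
noncomputable def derivedWeight {V : Type*} {Γ : Type*} [Group Γ] [DecidableEq Γ]
    (G : SimpleGraph V) [DecidableRel G.Adj] (α : V → V → Γ) (W : Matrix V V ℂ) :
    Matrix (V × Γ) (V × Γ) ℂ :=
  fun x y => if G.Adj x.1 y.1 ∧ y.2 = x.2 * α x.1 y.1 then W x.1 y.1 else 0

/-- The matrix `W_g`: the part of the weighted matrix supported on arcs with voltage `g`. -/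
noncomputable def voltagePart {V : Type*} {Γ : Type*} [DecidableEq Γ]
    (G : SimpleGraph V) [DecidableRel G.Adj] (α : V → V → Γ) (W : Matrix V V ℂ) (g : Γ) :
    Matrix V V ℂ :=
  fun i j => if G.Adj i j ∧ α i j = g then W i j else 0

/-- A matrix representation is irreducible if it is nonzero-dimensional and admits no proper
nonzero invariant subspace. -/
def IsIrreducibleRep {Γ : Type*} [Group Γ] {d : ℕ} (σ : Γ →* Matrix (Fin d) (Fin d) ℂ) : Prop :=
  0 < d ∧ ∀ p : Submodule ℂ (Fin d → ℂ), (∀ g, ∀ v ∈ p, (σ g).mulVec v ∈ p) → p = ⊥ ∨ p = ⊤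

namespace Matrix

variable {R : Type*} [CommRing R]

theorem det_blockDiagonal' {ι : Type*} [Fintype ι] [DecidableEq ι]
    {m : ι → Type*} [∀ i, Fintype (m i)] [∀ i, DecidableEq (m i)]
    (M : ∀ i, Matrix (m i) (m i) R) :
    (blockDiagonal' M).det = ∏ i, (M i).det := by
  -- any linear order on the blocks makes `blockDiagonal' M` block triangular
  let _ : LinearOrder ι := LinearOrder.lift' (Fintype.equivFin ι) (Fintype.equivFin ι).injective
  rw [(blockTriangular_blockDiagonal' M).det_fintype]
  refine Finset.prod_congr rfl fun i _ => ?_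
  let e : m i ≃ {x : Σ j, m j // x.1 = i} :=
    { toFun := fun y => ⟨⟨i, y⟩, rfl⟩
      invFun := fun x => cast (congrArg m x.2) x.1.2
      left_inv := fun _ => rfl
      right_inv := by rintro ⟨⟨_, _⟩, rfl⟩; rfl }
  rw [← det_submatrix_equiv_self e]
  congr 1
  ext x y
  exact blockDiagonal'_apply_eq M i x y

end Matrix

section Bartholdi

variable {R Γ : Type*} [CommRing R] [Fintype Γ]
variable {m n : Type*} [DecidableEq m] [DecidableEq n]

/-- With `A = ρ_i`, `X_g = W_g`, `c = (1 - u) t²` and `Y = D_w - (1 - u) I` this is the matrix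
of the `i`-th factor of the theorem. -/
def bartholdiMatrix (A : Γ → Matrix m m R) (X : Γ → Matrix n n R) (Y : Matrix n n R)
    (t c : R) : Matrix (m × n) (m × n) R :=
  1 - t • ∑ g, A g ⊗ₖ X g + c • ((1 : Matrix m m R) ⊗ₖ Y)

theorem det_bartholdiMatrix_eq_of_intertwine [Fintype m] [Fintype n] {ι : Type*} [Fintype ι]
    [DecidableEq ι]
    {A : Γ → Matrix m m R} {B : Γ → Matrix ι ι R} {P : Matrix m ι R} {Q : Matrix ι m R}
    (hPQ : P * Q = 1) (hQP : Q * P = 1) (hAB : ∀ g, A g * P = P * B g)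
    (X : Γ → Matrix n n R) (Y : Matrix n n R) (t c : R) :
    (bartholdiMatrix A X Y t c).det = (bartholdiMatrix B X Y t c).det := by
  set P' : Matrix (m × n) (ι × n) R := P ⊗ₖ 1
  set Q' : Matrix (ι × n) (m × n) R := Q ⊗ₖ 1
  have hconj : bartholdiMatrix A X Y t c * P' = P' * bartholdiMatrix B X Y t c := by
    simp only [P', bartholdiMatrix, Matrix.add_mul, Matrix.mul_add, Matrix.sub_mul,
      Matrix.mul_sub, Matrix.sum_mul, Matrix.mul_sum, Matrix.smul_mul, Matrix.mul_smul,
      ← mul_kronecker_mul, hAB, Matrix.one_mul, Matrix.mul_one]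
  have hPQ' : P' * Q' = 1 := by
    rw [← mul_kronecker_mul, hPQ, Matrix.one_mul, one_kronecker_one]
  have hQP' : Q' * P' = 1 := by
    rw [← mul_kronecker_mul, hQP, Matrix.one_mul, one_kronecker_one]
  calc (bartholdiMatrix A X Y t c).det
      = (bartholdiMatrix A X Y t c * P' * Q').det := by
        rw [Matrix.mul_assoc, hPQ', Matrix.mul_one]
    _ = (P' * bartholdiMatrix B X Y t c * Q').det := by rw [hconj]
    _ = (bartholdiMatrix B X Y t c).det := det_conj_of_mul_eq_one hPQ' hQP'

theorem bartholdiMatrix_const_one (X : Γ → Matrix n n R) (Y : Matrix n n R) (t c : R) :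
    bartholdiMatrix (fun _ => (1 : Matrix m m R)) X Y t c
      = (1 : Matrix m m R) ⊗ₖ (1 - t • ∑ g, X g + c • Y) := by
  ext ⟨a, p⟩ ⟨b, q⟩
  by_cases hab : a = b <;>
    simp [bartholdiMatrix, hab, one_apply, Matrix.sum_apply]

theorem bartholdiMatrix_blockDiagonal'_submatrix {ι : Type*} [DecidableEq ι]
    {p q : ι → Type*} [∀ i, Fintype (q i)] [∀ i, DecidableEq (p i)]
    [∀ i, DecidableEq (q i)]
    (A : (i : ι) → Γ → Matrix (q i) (q i) R) (X : Γ → Matrix n n R) (Y : Matrix n n R)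
    (t c : R) :
    (bartholdiMatrix (fun g => blockDiagonal' fun i => (1 : Matrix (p i) (p i) R) ⊗ₖ A i g)
        X Y t c).submatrix
        (fun x => (⟨x.1, x.2.1, x.2.2.1⟩, x.2.2.2))
        (fun x => (⟨x.1, x.2.1, x.2.2.1⟩, x.2.2.2))
      = blockDiagonal' fun i =>
          (1 : Matrix (p i) (p i) R) ⊗ₖ bartholdiMatrix (A i) X Y t c := by
  ext ⟨i, a, b, x⟩ ⟨j, a', b', y⟩
  rcases eq_or_ne i j with rfl | hij
  · by_cases ha : a = a' <;>
      simp [bartholdiMatrix, blockDiagonal'_apply_eq, ha, one_apply, Matrix.sum_apply,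
        Finset.mul_sum]
  · simp [bartholdiMatrix, blockDiagonal'_apply_ne _ _ _ hij, hij, one_apply, Matrix.sum_apply]

theorem det_bartholdiMatrix_blockDiagonal' [Fintype n] {ι : Type*} [Fintype ι] [DecidableEq ι]
    {p q : ι → Type*} [∀ i, Fintype (p i)] [∀ i, Fintype (q i)] [∀ i, DecidableEq (p i)]
    [∀ i, DecidableEq (q i)]
    (A : (i : ι) → Γ → Matrix (q i) (q i) R) (X : Γ → Matrix n n R) (Y : Matrix n n R)
    (t c : R) :
    (bartholdiMatrix (fun g => blockDiagonal' fun i => (1 : Matrix (p i) (p i) R) ⊗ₖ A i g)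
        X Y t c).det
      = ∏ i, (bartholdiMatrix (A i) X Y t c).det ^ Fintype.card (p i) := by
  let e : (Σ i, p i × (q i × n)) ≃ (Σ i, p i × q i) × n :=
    ((Equiv.sigmaProdDistrib (fun i => p i × q i) n).trans
      (Equiv.sigmaCongrRight fun i => Equiv.prodAssoc _ _ _)).symm
  have hblock : (bartholdiMatrix (fun g => blockDiagonal' fun i =>
      (1 : Matrix (p i) (p i) R) ⊗ₖ A i g) X Y t c).submatrix e e
      = blockDiagonal' fun i => (1 : Matrix (p i) (p i) R) ⊗ₖ bartholdiMatrix (A i) X Y t c :=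
    bartholdiMatrix_blockDiagonal'_submatrix A X Y t c
  rw [← det_submatrix_equiv_self e, hblock, det_blockDiagonal']
  simp [det_kronecker]

end Bartholdi

section Covering

variable {V Γ : Type*} [Fintype Γ] [DecidableEq Γ]
variable {G : SimpleGraph V} [DecidableRel G.Adj] (α : V → V → Γ) {W : Matrix V V ℂ}

theorem sum_voltagePart (hW0 : ∀ u v, ¬ G.Adj u v → W u v = 0) :
    ∑ g, voltagePart G α W g = W := by
  ext u v
  by_cases huv : G.Adj u v <;> simp [voltagePart, Matrix.sum_apply, huv, hW0 u v]

variable [Group Γ]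

theorem derivedWeight_submatrix_prodComm :
    (derivedWeight G α W).submatrix (Equiv.prodComm Γ V) (Equiv.prodComm Γ V)
      = ∑ g, (Equiv.mulRight g).permMatrix ℂ ⊗ₖ voltagePart G α W g := by
  ext ⟨g, u⟩ ⟨h, v⟩
  by_cases huv : G.Adj u v
  · simp [derivedWeight, voltagePart, Matrix.sum_apply, huv, eq_comm (a := h)]
  · simp [derivedWeight, voltagePart, Matrix.sum_apply, huv]

theorem sum_derivedWeight_apply [Fintype V] (hW0 : ∀ u v, ¬ G.Adj u v → W u v = 0)
    (x : V × Γ) : ∑ y, derivedWeight G α W x y = ∑ v, W x.1 v := by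
  rw [Fintype.sum_prod_type]
  refine Finset.sum_congr rfl fun v _ => ?_
  by_cases huv : G.Adj x.1 v <;> simp [derivedWeight, huv, hW0 x.1 v]

theorem det_derivedWeight_eq_det_bartholdiMatrix [Fintype V] [DecidableEq V]
    (hW0 : ∀ u v, ¬ G.Adj u v → W u v = 0) (t c b : ℂ) :
    (1 - t • derivedWeight G α W
        + c • (diagonal (fun x => ∑ y, derivedWeight G α W x y) - b • 1)).det
      = (bartholdiMatrix (fun g => (Equiv.mulRight g).permMatrix ℂ) (voltagePart G α W)
          (diagonal (fun u => ∑ v, W u v) - b • 1) t c).det := by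
  rw [← det_submatrix_equiv_self (Equiv.prodComm Γ V)]
  congr 1
  have hdiag : (diagonal (fun x => ∑ y, derivedWeight G α W x y) - b • 1).submatrix
      (Equiv.prodComm Γ V) (Equiv.prodComm Γ V)
      = (1 : Matrix Γ Γ ℂ) ⊗ₖ (diagonal (fun u => ∑ v, W u v) - b • 1) := by
    ext ⟨g, u⟩ ⟨h, v⟩
    by_cases hgh : g = h <;> by_cases huv : u = v <;>
      simp [sum_derivedWeight_apply α hW0, one_apply, hgh, huv]
  rw [bartholdiMatrix, ← hdiag, ← derivedWeight_submatrix_prodComm,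
    ← submatrix_one_equiv (Equiv.prodComm Γ V)]
  rfl

end Covering

section Intertwiners

variable {Γ : Type*} [Group Γ] [Fintype Γ] {d d' : ℕ}

theorem sum_mul_mul_inv_intertwines (σ : Γ →* Matrix (Fin d) (Fin d) ℂ)
    (τ : Γ →* Matrix (Fin d') (Fin d') ℂ) (E : Matrix (Fin d) (Fin d') ℂ) (h : Γ) :
    σ h * (∑ g, σ g * E * τ g⁻¹) = (∑ g, σ g * E * τ g⁻¹) * τ h := by
  rw [Matrix.mul_sum, Matrix.sum_mul]
  refine Fintype.sum_equiv (Equiv.mulLeft h) _ _ fun g => ?_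
  simp only [Equiv.coe_mulLeft, _root_.mul_inv_rev, map_mul, Matrix.mul_assoc]
  rw [← map_mul τ h⁻¹ h, inv_mul_cancel, map_one, Matrix.mul_one]

theorem sum_apply_mul_inv_apply_eq_zero {σ : Γ →* Matrix (Fin d) (Fin d) ℂ}
    {τ : Γ →* Matrix (Fin d') (Fin d') ℂ}
    (hστ : ∀ S : Matrix (Fin d) (Fin d') ℂ, (∀ g, σ g * S = S * τ g) → S = 0)
    (a b : Fin d) (c e : Fin d') :
    ∑ g, σ g a b * τ g⁻¹ c e = 0 := by
  have h := congr_fun₂ (hστ _ (sum_mul_mul_inv_intertwines σ τ (single b c 1))) a e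
  simpa [Matrix.sum_apply, Matrix.mul_apply, single_apply, ite_and] using h

end Intertwiners

namespace IsIrreducibleRep

variable {Γ : Type*} [Group Γ] {d : ℕ} {σ : Γ →* Matrix (Fin d) (Fin d) ℂ}

theorem exists_eq_smul_one_of_commute (hσ : IsIrreducibleRep σ) {S : Matrix (Fin d) (Fin d) ℂ}
    (hS : ∀ g, σ g * S = S * σ g) : ∃ c : ℂ, S = c • 1 := by
  have : NeZero d := ⟨hσ.1.ne'⟩
  obtain ⟨c, hc⟩ := Module.End.exists_eigenvalue (toLin' S)
  obtain ⟨v, hv⟩ := hc.exists_hasEigenvector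
  refine ⟨c, sub_eq_zero.mp ?_⟩
  set T := S - c • (1 : Matrix (Fin d) (Fin d) ℂ)
  have hv_ker : v ∈ LinearMap.ker (toLin' T) := by
    simp [T, hv.apply_eq_smul]
  have hinv : ∀ g, ∀ w ∈ LinearMap.ker (toLin' T),
      σ g *ᵥ w ∈ LinearMap.ker (toLin' T) := by
    intro g w hw
    have hT : T * σ g = σ g * T := by simp [T, Matrix.sub_mul, Matrix.mul_sub, hS g]
    simp only [LinearMap.mem_ker, toLin'_apply, mulVec_mulVec, hT] at hw ⊢
    rw [← mulVec_mulVec, hw, mulVec_zero]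
  have htop : LinearMap.ker (toLin' T) = ⊤ :=
    (hσ.2 _ hinv).resolve_left fun h => hv.2 (by simpa [h] using hv_ker)
  exact toLin'.injective (by rw [LinearMap.ker_eq_top.mp htop, map_zero])

variable [Fintype Γ]

theorem sum_mul_mul_inv_eq (hσ : IsIrreducibleRep σ) (E : Matrix (Fin d) (Fin d) ℂ) :
    ∑ g, σ g * E * σ g⁻¹ = (Fintype.card Γ * E.trace / d) • 1 := by
  obtain ⟨c, hc⟩ := hσ.exists_eq_smul_one_of_commute (sum_mul_mul_inv_intertwines σ σ E)
  have htrace : (∑ g, σ g * E * σ g⁻¹).trace = Fintype.card Γ * E.trace := by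
    simp [trace_sum, trace_mul_cycle, ← map_mul]
  have hd : (d : ℂ) ≠ 0 := Nat.cast_ne_zero.mpr hσ.1.ne'
  rw [hc, trace_smul, trace_one, Fintype.card_fin, smul_eq_mul] at htrace
  rw [hc, ← htrace, mul_div_cancel_right₀ _ hd]

theorem sum_apply_mul_inv_apply (hσ : IsIrreducibleRep σ) (a b c e : Fin d) :
    ∑ g, σ g a b * σ g⁻¹ c e
      = if a = e ∧ b = c then (Fintype.card Γ / d : ℂ) else 0 := by
  have h := congr_fun₂ (hσ.sum_mul_mul_inv_eq (single b c 1)) a e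
  simp only [Matrix.sum_apply, Matrix.mul_apply, single_apply, ite_and, mul_ite, mul_one,
    mul_zero, sum_ite_eq, mem_univ, ↓reduceIte, ite_mul, zero_mul, Matrix.smul_apply,
    smul_eq_mul] at h
  rw [h, one_apply]
  obtain rfl | hbc := eq_or_ne b c
  · by_cases hae : a = e <;> simp [hae]
  · simp [hbc, trace_single_eq_of_ne _ _ _ hbc]

end IsIrreducibleRep

section Fourier

variable {Γ : Type*} [Group Γ] [Fintype Γ] {ι : Type*} {f : ι → ℕ}
variable (ρ : (i : ι) → Γ →* Matrix (Fin (f i)) (Fin (f i)) ℂ)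

def fourierMatrix : Matrix Γ (Σ i, Fin (f i) × Fin (f i)) ℂ :=
  fun g x => ρ x.1 g x.2.1 x.2.2

noncomputable def inverseFourierMatrix : Matrix (Σ i, Fin (f i) × Fin (f i)) Γ ℂ :=
  fun x g => f x.1 / Fintype.card Γ * ρ x.1 g⁻¹ x.2.2 x.2.1

variable {ρ}

theorem inverseFourierMatrix_mul_fourierMatrix [DecidableEq ι]
    (hirr : ∀ i, IsIrreducibleRep (ρ i))
    (hinequiv : ∀ i j, i ≠ j → ∀ S : Matrix (Fin (f j)) (Fin (f i)) ℂ,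
      (∀ g, ρ j g * S = S * ρ i g) → S = 0) :
    inverseFourierMatrix ρ * fourierMatrix ρ = 1 := by
  ext ⟨i, a, b⟩ ⟨j, c, e⟩
  have hsum : (inverseFourierMatrix ρ * fourierMatrix ρ) ⟨i, a, b⟩ ⟨j, c, e⟩
      = f i / Fintype.card Γ * ∑ g, ρ j g c e * ρ i g⁻¹ b a := by
    simp only [mul_apply, inverseFourierMatrix, fourierMatrix, Finset.mul_sum]
    exact Finset.sum_congr rfl fun g _ => by ring
  rw [hsum]
  obtain rfl | hij := eq_or_ne i j
  · have hf : (f i : ℂ) ≠ 0 := Nat.cast_ne_zero.mpr (hirr i).1.ne'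
    have hΓ : (Fintype.card Γ : ℂ) ≠ 0 := Nat.cast_ne_zero.mpr Fintype.card_ne_zero
    rw [(hirr i).sum_apply_mul_inv_apply]
    by_cases hca : a = c <;> by_cases heb : b = e <;>
      simp [hca, heb, eq_comm, one_apply, hf, hΓ]
  · rw [sum_apply_mul_inv_apply_eq_zero (hinequiv i j hij), mul_zero,
      one_apply_ne fun h => hij (congrArg Sigma.fst h)]

theorem fourierMatrix_mul_inverseFourierMatrix [DecidableEq Γ] [Fintype ι]
    (hirr : ∀ i, IsIrreducibleRep (ρ i))
    (hinequiv : ∀ i j, i ≠ j → ∀ S : Matrix (Fin (f j)) (Fin (f i)) ℂ,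
      (∀ g, ρ j g * S = S * ρ i g) → S = 0)
    (hcomplete : ∑ i, f i ^ 2 = Fintype.card Γ) :
    fourierMatrix ρ * inverseFourierMatrix ρ = 1 := by
  classical
  have hcard : Fintype.card Γ = Fintype.card (Σ i, Fin (f i) × Fin (f i)) := by
    simp [← hcomplete, sq]
  exact (mul_eq_one_comm_of_equiv (Fintype.equivOfCardEq hcard)).mpr
    (inverseFourierMatrix_mul_fourierMatrix hirr hinequiv)

variable (ρ)

theorem permMatrix_mulRight_mul_fourierMatrix [DecidableEq Γ] [Fintype ι] [DecidableEq ι]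
    (g : Γ) :
    (Equiv.mulRight g).permMatrix ℂ * fourierMatrix ρ
      = fourierMatrix ρ *
          blockDiagonal' fun i => (1 : Matrix (Fin (f i)) (Fin (f i)) ℂ) ⊗ₖ ρ i g := by
  ext h ⟨i, a, b⟩
  simp [mul_apply, fourierMatrix, Fintype.sum_sigma, Fintype.sum_prod_type]
  rw [Fintype.sum_eq_single i fun j hj => by simp [blockDiagonal'_apply_ne _ _ _ hj]]
  simp [blockDiagonal'_apply_eq, one_apply, ite_mul]

end Fourier

theorem stmt14_general {n : ℕ} (G : SimpleGraph (Fin n)) [DecidableRel G.Adj]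
    {Γ : Type*} [Group Γ] [Fintype Γ] [DecidableEq Γ]
    (α : Fin n → Fin n → Γ)
    (W : Matrix (Fin n) (Fin n) ℂ)
    (hW0 : ∀ i j, ¬ G.Adj i j → W i j = 0)
    (k : ℕ) (f : Fin (k + 1) → ℕ)
    (ρ : (i : Fin (k + 1)) → Γ →* Matrix (Fin (f i)) (Fin (f i)) ℂ)
    (hf1 : f 0 = 1) (hρ1 : ∀ g, ρ 0 g = 1)
    (hirr : ∀ i, IsIrreducibleRep (ρ i))
    (hinequiv : ∀ i j, i ≠ j → ∀ S : Matrix (Fin (f j)) (Fin (f i)) ℂ,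
      (∀ g, ρ j g * S = S * ρ i g) → S = 0)
    (hcomplete : ∑ i, (f i) ^ 2 = Fintype.card Γ) :
    ∀ u t : ℂ,
      Matrix.det ((1 : Matrix (Fin n × Γ) (Fin n × Γ) ℂ) - t • derivedWeight G α W
          + ((1 - u) * t ^ 2) •
            (Matrix.diagonal (fun x => ∑ y, derivedWeight G α W x y) - (1 - u) • 1))
      = Matrix.det ((1 : Matrix (Fin n) (Fin n) ℂ) - t • W
          + ((1 - u) * t ^ 2) • (Matrix.diagonal (fun i => ∑ j, W i j) - (1 - u) • 1)) *
        ∏ i ∈ Finset.univ.erase 0,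
          (Matrix.det ((1 : Matrix (Fin (f i) × Fin n) (Fin (f i) × Fin n) ℂ)
              - t • (∑ g, ρ i g ⊗ₖ voltagePart G α W g)
              + ((1 - u) * t ^ 2) •
                ((1 : Matrix (Fin (f i)) (Fin (f i)) ℂ) ⊗ₖ
                  (Matrix.diagonal (fun j => ∑ l, W j l) - (1 - u) • 1)))) ^ (f i) := by
  intro u t
  have htrivial : (bartholdiMatrix (fun g => ρ 0 g) (voltagePart G α W)
      (diagonal (fun j => ∑ l, W j l) - (1 - u) • 1) t ((1 - u) * t ^ 2)).det ^ f 0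
      = ((1 : Matrix (Fin n) (Fin n) ℂ) - t • W
          + ((1 - u) * t ^ 2) • (diagonal (fun i => ∑ j, W i j) - (1 - u) • 1)).det := by
    simp only [hρ1, bartholdiMatrix_const_one, sum_voltagePart α hW0, det_kronecker, det_one,
      one_pow, one_mul, Fintype.card_fin, hf1, pow_one]
  rw [det_derivedWeight_eq_det_bartholdiMatrix α hW0,
    det_bartholdiMatrix_eq_of_intertwine
      (fourierMatrix_mul_inverseFourierMatrix hirr hinequiv hcomplete)
      (inverseFourierMatrix_mul_fourierMatrix hirr hinequiv)
      (permMatrix_mulRight_mul_fourierMatrix ρ),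
    det_bartholdiMatrix_blockDiagonal', ← Finset.mul_prod_erase _ _ (Finset.mem_univ 0)]
  simp only [Fintype.card_fin]
  rw [htrivial]
  rfl

/-- Mizuno–Sato. -/
theorem stmt14 {n : ℕ} (G : SimpleGraph (Fin n)) [DecidableRel G.Adj] (hG : G.Connected)
    {Γ : Type*} [Group Γ] [Fintype Γ] [DecidableEq Γ]
    (α : Fin n → Fin n → Γ) (hα : ∀ u v, G.Adj u v → α v u = (α u v)⁻¹)
    (W : Matrix (Fin n) (Fin n) ℂ)
    (hWsym : ∀ i j, W i j = W j i)
    (hW0 : ∀ i j, ¬ G.Adj i j → W i j = 0)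
    (k : ℕ) (f : Fin (k + 1) → ℕ)
    (ρ : (i : Fin (k + 1)) → Γ →* Matrix (Fin (f i)) (Fin (f i)) ℂ)
    (hf1 : f 0 = 1) (hρ1 : ∀ g, ρ 0 g = 1)
    (hirr : ∀ i, IsIrreducibleRep (ρ i))
    (hinequiv : ∀ i j, i ≠ j → ∀ S : Matrix (Fin (f j)) (Fin (f i)) ℂ,
      (∀ g, ρ j g * S = S * ρ i g) → S = 0)
    (hcomplete : ∑ i, (f i) ^ 2 = Fintype.card Γ) :
    ∀ u t : ℂ,
      Matrix.det ((1 : Matrix (Fin n × Γ) (Fin n × Γ) ℂ) - t • derivedWeight G α W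
          + ((1 - u) * t ^ 2) •
            (Matrix.diagonal (fun x => ∑ y, derivedWeight G α W x y) - (1 - u) • 1))
      = Matrix.det ((1 : Matrix (Fin n) (Fin n) ℂ) - t • W
          + ((1 - u) * t ^ 2) • (Matrix.diagonal (fun i => ∑ j, W i j) - (1 - u) • 1)) *
        ∏ i ∈ Finset.univ.erase 0,
          (Matrix.det ((1 : Matrix (Fin (f i) × Fin n) (Fin (f i) × Fin n) ℂ)
              - t • (∑ g, ρ i g ⊗ₖ voltagePart G α W g)
              + ((1 - u) * t ^ 2) •
                ((1 : Matrix (Fin (f i)) (Fin (f i)) ℂ) ⊗ₖ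
                  (Matrix.diagonal (fun j => ∑ l, W j l) - (1 - u) • 1)))) ^ (f i) :=
  stmt14_general G α W hW0 k f ρ hf1 hρ1 hirr hinequiv hcomplete
end
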